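/- Let α be a partial action of a finite group G on a unital ring R. Then R has right Krull dimension if and only if R*_α G has right Krull dimension, and in that case Kdim(R) = Kdim(R*_α G). -/

import Mathlib

/-! Through `δ_1`, `A` is a right `R`-module generated by the finitely many elements `δ_g(1_g)`,
since `a δ_g = δ_g(1_g) · δ_1(α_g⁻¹(a))`. Filtering it by these generators embeds the right ideals
of `A` strictly monotonically into a finite power of the lattice of right ideals of `R`, so
`Kdim A ≤ Kdim R`. Conversely, the `δ_1`-coefficient is a left `R`-linear retraction `A → R`, so
`I ↦ I A` embeds the right ideals of `R` into those of `A`, and `Kdim R ≤ Kdim A`. Deviation bounds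
pull back along strictly monotone maps and are preserved by finite products. -/

/-- A unital (untwisted) partial action of a group `G` on a unital ring `R`:
the domain `D g` is the ideal generated by the central idempotent `e g`
(`D g = {x | e g * x = x}`), and `act g` is the ring isomorphism
`α_g : D g⁻¹ → D g` (values outside `D g⁻¹` are irrelevant). -/
structure PartialAction (G : Type) [Group G] (R : Type) [Ring R] where
  e : G → R
  idem : ∀ g, e g * e g = e g
  central : ∀ g r, e g * r = r * e g
  e_one : e 1 = 1
  act : G → R → R
  act_mem : ∀ g x, e g⁻¹ * x = x → e g * act g x = act g x
  act_add : ∀ g x y, e g⁻¹ * x = x → e g⁻¹ * y = y →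
    act g (x + y) = act g x + act g y
  act_mul : ∀ g x y, e g⁻¹ * x = x → e g⁻¹ * y = y →
    act g (x * y) = act g x * act g y
  act_one : ∀ x, act 1 x = x
  inv_act : ∀ g x, e g⁻¹ * x = x → act g⁻¹ (act g x) = x
  -- α_g(D_{g⁻¹} ∩ D_h) = D_g ∩ D_{gh}
  act_range : ∀ g h x, e g⁻¹ * x = x → e h * x = x → e (g * h) * act g x = act g x
  act_range' : ∀ g h y, e g * y = y → e (g * h) * y = y →
    ∃ x, e g⁻¹ * x = x ∧ e h * x = x ∧ act g x = y
  -- α_g ∘ α_h = α_{gh} on α_{h⁻¹}(D_h ∩ D_{g⁻¹})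
  comp : ∀ g h a, e h⁻¹ * a = a → e (h⁻¹ * g⁻¹) * a = a →
    act g (act h a) = act (g * h) a

/-- A realization of the partial skew group ring `R *_α G`:  a ring `A` with
maps `δ g : D g → A` such that `A = ⊕_{g ∈ G} D g δ_g` with multiplication
`(a δ_g)(b δ_h) = α_g(α_{g⁻¹}(a) b) δ_{gh}`. -/
structure IsPartialSkewGroupRing {G R : Type} [Group G] [Ring R]
    (pa : PartialAction G R) (A : Type) [Ring A] (δ : G → R → A) : Prop where
  proj : ∀ g a, δ g a = δ g (pa.e g * a)
  add : ∀ g a b, δ g (a + b) = δ g a + δ g b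
  mul : ∀ g h a b, pa.e g * a = a → pa.e h * b = b →
    δ g a * δ h b = δ (g * h) (pa.act g (pa.act g⁻¹ a * b))
  one : δ 1 1 = 1
  indep : ∀ (s : Finset G) (a : G → R), (∀ g, pa.e g * a g = a g) →
    (∑ g ∈ s, δ g (a g)) = 0 → ∀ g ∈ s, a g = 0
  span : ∀ x : A, ∃ (s : Finset G) (a : G → R),
    (∀ g, pa.e g * a g = a g) ∧ x = ∑ g ∈ s, δ g (a g)
/-- `DeviationLE o α` says that the deviation of the poset `α` (in the sense of
Gabriel–Rentschler) is at most the ordinal `o`:  in every descending chain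
`f 0 ≥ f 1 ≥ …`, for all but finitely many `n` the factor interval
`[f (n+1), f n]` is either trivial or has deviation `≤ o'` for some `o' < o`. -/
def DeviationLE (o : Ordinal.{0}) (α : Type) [Preorder α] : Prop :=
  ∀ f : ℕ → α, (∀ n, f (n + 1) ≤ f n) →
    ∃ N : ℕ, ∀ n ≥ N, f n ≤ f (n + 1) ∨
      ∃ (o' : Ordinal.{0}) (_ : o' < o),
        DeviationLE o' (Set.Icc (f (n + 1)) (f n))
termination_by o

/-- A module `M` has Krull dimension when the lattice of its submodules has
(ordinal-valued) deviation. -/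
def HasKrullDimModule (R M : Type) [Ring R] [AddCommGroup M] [Module R M] : Prop :=
  ∃ o : Ordinal.{0}, DeviationLE o (Submodule R M)

/-- A ring has right Krull dimension when the lattice of its right ideals,
i.e. of left ideals of the opposite ring, has deviation. -/
def HasRightKrullDim (A : Type) [Ring A] : Prop :=
  ∃ o : Ordinal.{0}, DeviationLE o (Submodule Aᵐᵒᵖ Aᵐᵒᵖ)

/-- `Kdim A ≤ Kdim B` (for the right Krull dimensions):  every ordinal bounding
the deviation of the right ideal lattice of `B` also bounds that of `A`. -/
def RightKrullDimLE (A B : Type) [Ring A] [Ring B] : Prop :=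
  ∀ o : Ordinal.{0}, DeviationLE o (Submodule Bᵐᵒᵖ Bᵐᵒᵖ) →
    DeviationLE o (Submodule Aᵐᵒᵖ Aᵐᵒᵖ)

open Finset MulOpposite

theorem deviationLE_iff (o : Ordinal.{0}) (α : Type) [Preorder α] :
    DeviationLE o α ↔ ∀ f : ℕ → α, (∀ n, f (n + 1) ≤ f n) →
      ∃ N : ℕ, ∀ n ≥ N, f n ≤ f (n + 1) ∨
        ∃ (o' : Ordinal.{0}) (_ : o' < o), DeviationLE o' (Set.Icc (f (n + 1)) (f n)) := by
  rw [DeviationLE]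

namespace DeviationLE

theorem mono {o o' : Ordinal.{0}} {α : Type} [Preorder α] (hle : o ≤ o')
    (h : DeviationLE o α) : DeviationLE o' α := by
  rw [deviationLE_iff] at h ⊢
  intro f hf
  obtain ⟨N, hN⟩ := h f hf
  exact ⟨N, fun n hn => (hN n hn).imp_right fun ⟨o'', ho'', hd⟩ => ⟨o'', ho''.trans_le hle, hd⟩⟩

theorem Icc_of_le {o : Ordinal.{0}} {α : Type} [Preorder α] {a b : α} (hba : b ≤ a) :
    DeviationLE o (Set.Icc a b) := by
  rw [deviationLE_iff]
  exact fun f _ => ⟨0, fun n _ => Or.inl ((f n).2.2.trans (hba.trans (f (n + 1)).2.1))⟩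

theorem of_strictMono {o : Ordinal.{0}} {α β : Type} [PartialOrder α] [PartialOrder β]
    {F : α → β} (hF : StrictMono F) (h : DeviationLE o β) : DeviationLE o α := by
  induction o using WellFoundedLT.induction generalizing α β with
  | _ o IH =>
  rw [deviationLE_iff] at h ⊢
  intro f hf
  obtain ⟨N, hN⟩ := h (F ∘ f) fun n => hF.monotone (hf n)
  refine ⟨N, fun n hn => (hN n hn).imp (fun hle => ?_) fun ⟨o', ho', hd⟩ => ⟨o', ho', ?_⟩⟩
  · rcases (hf n).lt_or_eq with hlt | heq
    · exact absurd hle (hF hlt).not_ge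
    · exact heq.ge
  · refine IH o' ho' (F := fun x => ⟨F x, hF.monotone x.2.1, hF.monotone x.2.2⟩) ?_ hd
    exact fun x y hxy => Subtype.mk_lt_mk.2 (hF hxy)

theorem pi {o : Ordinal.{0}} {ι : Type} [Fintype ι] {β : ι → Type} [∀ i, PartialOrder (β i)]
    (h : ∀ i, DeviationLE o (β i)) : DeviationLE o (∀ i, β i) := by
  induction o using WellFoundedLT.induction generalizing β with
  | _ o IH =>
  rw [deviationLE_iff]
  intro f hf
  choose N hN using fun i =>
    (deviationLE_iff o (β i)).1 (h i) (fun n => f n i) fun n => hf n i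
  refine ⟨univ.sup N, fun n hn => ?_⟩
  have hcomp i := hN i n ((le_sup (mem_univ i)).trans hn)
  by_cases htriv : ∀ i, f n i ≤ f (n + 1) i
  · exact Or.inl htriv
  obtain ⟨j, hj⟩ := not_forall.1 htriv
  have ho : 0 < o := by
    obtain ⟨o', ho', -⟩ := (hcomp j).resolve_left hj
    exact zero_le.trans_lt ho'
  -- once `o > 0`, a trivial component interval also has deviation below `o`
  have hbound : ∀ i, ∃ o' < o, DeviationLE o' (Set.Icc (f (n + 1) i) (f n i)) := fun i =>
    (hcomp i).elim (fun hle => ⟨0, ho, Icc_of_le hle⟩) fun ⟨o', ho', hd⟩ => ⟨o', ho', hd⟩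
  choose ob hob hd using hbound
  refine Or.inr ⟨univ.sup ob, (Finset.sup_lt_iff ho).2 fun i _ => hob i, ?_⟩
  refine of_strictMono (F := fun x i => ⟨x.1 i, x.2.1 i, x.2.2 i⟩) ?_
    (IH _ ((Finset.sup_lt_iff ho).2 fun i _ => hob i) fun i => (hd i).mono (le_sup (mem_univ i)))
  refine Monotone.strictMono_of_injective (fun x y hxy i => hxy i) fun x y hxy => ?_
  exact Subtype.ext (funext fun i => congrArg Subtype.val (congrFun hxy i))

end DeviationLE

theorem Submodule.inf_sup_range_le_of_comap_le {S M P : Type} [Ring S] [AddCommGroup M]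
    [Module S M] [AddCommGroup P] [Module S P] {N N' L : Submodule S M} (φ : P →ₗ[S] M)
    (hN : N ≤ N') (hL : N' ⊓ L ≤ N) (hφ : (N' ⊔ L).comap φ ≤ (N ⊔ L).comap φ) :
    N' ⊓ (L ⊔ LinearMap.range φ) ≤ N := by
  rintro x ⟨hxN', hx⟩
  obtain ⟨y, hyL, _, ⟨p, rfl⟩, rfl⟩ := Submodule.mem_sup.1 hx
  have hp : φ p ∈ N' ⊔ L := by
    simpa using Submodule.sub_mem_sup hxN' hyL
  obtain ⟨u, huN, v, hvL, huv⟩ := Submodule.mem_sup.1 (hφ hp)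
  have hxu : y + φ p - u ∈ N := by
    refine hL ⟨N'.sub_mem hxN' (hN huN), ?_⟩
    rw [← huv, add_sub_assoc, add_sub_cancel_left]
    exact L.add_mem hyL hvL
  simpa using N.add_mem hxu huN

namespace DeviationLE

/-- Reading off, for each generator `m i`, its coefficients modulo the span of the earlier
generators embeds `Submodule S M` strictly monotonically into `Fin n → Submodule S S`. -/
theorem submodule_of_finite {o : Ordinal.{0}} {S M : Type} [Ring S] [AddCommGroup M]
    [Module S M] [Module.Finite S M] (h : DeviationLE o (Submodule S S)) :
    DeviationLE o (Submodule S M) := by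
  obtain ⟨n, m, hm⟩ := Module.Finite.exists_fin (R := S) (M := M)
  let layer (k : ℕ) : Submodule S M := Submodule.span S (m '' {j | (j : ℕ) < k})
  refine of_strictMono (F := fun N (i : Fin n) =>
    (N ⊔ layer i).comap (LinearMap.toSpanSingleton S M (m i))) ?_ (pi fun _ => h)
  intro N N' hlt
  refine lt_of_le_not_ge (fun i => Submodule.comap_mono (sup_le_sup_right hlt.le _)) fun hΦ => ?_
  have hinf_layer : ∀ k ≤ n, N' ⊓ layer k ≤ N := by
    intro k
    induction k with
    | zero => intro _; simp [layer]
    | succ k ih =>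
      intro hk
      have hlayer : layer (k + 1) =
          layer k ⊔ LinearMap.range (LinearMap.toSpanSingleton S M (m ⟨k, hk⟩)) := by
        have : {j : Fin n | (j : ℕ) < k + 1} = {j : Fin n | (j : ℕ) < k} ∪ {⟨k, hk⟩} := by
          ext j
          simp only [Set.mem_ofPred_eq, Set.mem_union, Set.mem_singleton_iff, Fin.ext_iff]
          omega
        rw [LinearMap.range_toSpanSingleton, ← Set.image_singleton, ← Submodule.span_union,
          ← Set.image_union, ← this]
      rw [hlayer]
      exact Submodule.inf_sup_range_le_of_comap_le _ hlt.le (ih (by omega)) (hΦ ⟨k, hk⟩)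
  have hlayer : layer n = ⊤ := by
    have : {j : Fin n | (j : ℕ) < n} = Set.univ := Set.eq_univ_of_forall fun j => j.2
    simp only [layer, this, Set.image_univ, hm]
  exact hlt.not_ge fun x hx => hinf_layer n le_rfl ⟨hx, hlayer ▸ Submodule.mem_top⟩

/-- Right ideals of `A` are in particular submodules of the finitely generated right `B`-module
`A`. -/
theorem rightIdeals_of_finite {o : Ordinal.{0}} {B A ι : Type} [Ring B] [Ring A] [Fintype ι]
    (f : B →+* A) (m : ι → A) (hm : ∀ x, ∃ c : ι → B, x = ∑ i, m i * f (c i))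
    (h : DeviationLE o (Submodule Bᵐᵒᵖ Bᵐᵒᵖ)) : DeviationLE o (Submodule Aᵐᵒᵖ Aᵐᵒᵖ) := by
  let _ : Module Bᵐᵒᵖ Aᵐᵒᵖ := Module.compHom Aᵐᵒᵖ (RingHom.op f)
  have : IsScalarTower Bᵐᵒᵖ Aᵐᵒᵖ Aᵐᵒᵖ := ⟨fun _ _ _ => mul_assoc _ _ _⟩
  have : Module.Finite Bᵐᵒᵖ Aᵐᵒᵖ := by
    refine Module.Finite.of_surjective (Fintype.linearCombination Bᵐᵒᵖ (op ∘ m)) fun x => ?_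
    obtain ⟨c, hc⟩ := hm x.unop
    refine ⟨op ∘ c, unop_injective ?_⟩
    rw [Fintype.linearCombination_apply, hc, unop_sum]
    rfl
  exact of_strictMono (Submodule.restrictScalarsEmbedding Bᵐᵒᵖ Aᵐᵒᵖ Aᵐᵒᵖ).strictMono
    (submodule_of_finite h)

/-- The retraction `π` recovers `I` from `I A`, so `I ↦ I A` is injective on right ideals. -/
theorem rightIdeals_of_retraction {o : Ordinal.{0}} {B A : Type} [Ring B] [Ring A]
    (f : B →+* A) (π : A →+ B) (hπ : ∀ b x, π (f b * x) = b * π x) (hπ1 : π 1 = 1)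
    (h : DeviationLE o (Submodule Aᵐᵒᵖ Aᵐᵒᵖ)) : DeviationLE o (Submodule Bᵐᵒᵖ Bᵐᵒᵖ) := by
  have hcomap : ∀ I : Ideal Bᵐᵒᵖ, (I.map (RingHom.op f)).comap (RingHom.op f) = I := by
    refine fun I => le_antisymm (fun b hb => ?_) Ideal.le_comap_map
    have hπ_mem : ∀ y ∈ I.map (RingHom.op f), ∀ a : Aᵐᵒᵖ, op (π (unop (a * y))) ∈ I := by
      intro y hy
      induction hy using Submodule.span_induction with
      | mem y hy =>
        obtain ⟨i, hi, rfl⟩ := hy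
        intro a
        simpa [hπ] using I.smul_mem (op (π (unop a))) hi
      | zero => simp
      | add y z _ _ hy hz => intro a; simpa [mul_add] using I.add_mem (hy a) (hz a)
      | smul c y _ hy => intro a; simpa [mul_assoc] using hy (a * c)
    have hπf : π (f b.unop) = b.unop := by simpa [hπ1] using hπ b.unop 1
    simpa [hπf] using hπ_mem _ hb 1
  refine of_strictMono (F := Ideal.map (RingHom.op f))
    (Monotone.strictMono_of_injective (fun _ _ => Ideal.map_mono) fun I J hIJ => ?_) h
  rw [← hcomap I, ← hcomap J, hIJ]

end DeviationLE

theorem PartialAction.act_inv_e {G R : Type} [Group G] [Ring R] (pa : PartialAction G R)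
    (g : G) : pa.act g⁻¹ (pa.e g) = pa.e g⁻¹ := by
  set u := pa.act g⁻¹ (pa.e g)
  have he : pa.e g⁻¹⁻¹ * pa.e g = pa.e g := by rw [inv_inv, pa.idem]
  -- `u` is a unit for `D g⁻¹` lying in `D g⁻¹`, hence is its identity `e g⁻¹`
  have hunit : ∀ x, pa.e g⁻¹ * x = x → u * x = x := by
    intro x hx
    have hgx : pa.e g⁻¹⁻¹ * pa.act g x = pa.act g x := by rw [inv_inv]; exact pa.act_mem g x hx
    calc u * x = pa.act g⁻¹ (pa.e g) * pa.act g⁻¹ (pa.act g x) := by rw [pa.inv_act g x hx]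
      _ = pa.act g⁻¹ (pa.e g * pa.act g x) := (pa.act_mul g⁻¹ _ _ he hgx).symm
      _ = x := by rw [inv_inv] at hgx; rw [hgx, pa.inv_act g x hx]
  calc u = pa.e g⁻¹ * u := (pa.act_mem g⁻¹ (pa.e g) he).symm
    _ = u * pa.e g⁻¹ := pa.central g⁻¹ u
    _ = pa.e g⁻¹ := hunit _ (pa.idem g⁻¹)

namespace IsPartialSkewGroupRing

variable {G R A : Type} [Group G] [Ring R] [Ring A] {pa : PartialAction G R} {δ : G → R → A}
  (hcp : IsPartialSkewGroupRing pa A δ)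
include hcp

def deltaAddHom (g : G) : R →+ A := AddMonoidHom.mk' (δ g) (hcp.add g)

@[simp]
theorem deltaAddHom_apply (g : G) (a : R) : hcp.deltaAddHom g a = δ g a := rfl

theorem delta_zero (g : G) : δ g 0 = 0 := map_zero (hcp.deltaAddHom g)

theorem delta_one_mul_delta {g : G} (a : R) {b : R} (hb : pa.e g * b = b) :
    δ 1 a * δ g b = δ g (a * b) := by
  simpa [pa.act_one] using hcp.mul 1 g a b (by rw [pa.e_one, one_mul]) hb

def deltaOne : R →+* A where
  toFun := δ 1
  map_one' := hcp.one
  map_mul' a b := (hcp.delta_one_mul_delta a (by rw [pa.e_one, one_mul])).symm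
  map_zero' := hcp.delta_zero 1
  map_add' := hcp.add 1

@[simp]
theorem deltaOne_apply (a : R) : hcp.deltaOne a = δ 1 a := rfl

theorem delta_e_mul_delta_one {g : G} {c : R} (hc : pa.e g⁻¹ * c = c) :
    δ g (pa.e g) * δ 1 c = δ g (pa.act g c) := by
  rw [hcp.mul g 1 _ c (pa.idem g) (by rw [pa.e_one, one_mul]), pa.act_inv_e, hc, mul_one]

theorem exists_delta_eq_mul_delta_one {g : G} {a : R} (ha : pa.e g * a = a) :
    ∃ c, δ g a = δ g (pa.e g) * δ 1 c := by
  obtain ⟨c, hc, -, rfl⟩ := pa.act_range' g 1 a ha (by rwa [mul_one])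
  exact ⟨c, (hcp.delta_e_mul_delta_one hc).symm⟩

variable [Fintype G]

theorem exists_eq_sum (x : A) :
    ∃ a : G → R, (∀ g, pa.e g * a g = a g) ∧ x = ∑ g, δ g (a g) := by
  classical
  obtain ⟨s, a, ha, rfl⟩ := hcp.span x
  refine ⟨fun g => if g ∈ s then a g else 0, fun g => by by_cases hg : g ∈ s <;> simp [hg, ha], ?_⟩
  rw [← Finset.sum_subset (Finset.subset_univ s) fun g _ hg => by simp [hg, hcp.delta_zero]]
  exact Finset.sum_congr rfl fun g hg => by simp [hg]

theorem eq_of_sum_eq {a b : G → R} (ha : ∀ g, pa.e g * a g = a g)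
    (hb : ∀ g, pa.e g * b g = b g) (h : ∑ g, δ g (a g) = ∑ g, δ g (b g)) : a = b := by
  have hsub : ∑ g, δ g (a g - b g) = 0 := by
    simp only [← deltaAddHom_apply hcp, map_sub, Finset.sum_sub_distrib]
    simp only [deltaAddHom_apply, h, sub_self]
  funext g
  exact sub_eq_zero.1 <|
    hcp.indep Finset.univ (a - b) (fun g => by simp [mul_sub, ha, hb]) hsub g (Finset.mem_univ g)

noncomputable def coeff (x : A) : G → R := (hcp.exists_eq_sum x).choose

theorem e_mul_coeff (x : A) (g : G) : pa.e g * hcp.coeff x g = hcp.coeff x g :=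
  (hcp.exists_eq_sum x).choose_spec.1 g

theorem sum_delta_coeff (x : A) : ∑ g, δ g (hcp.coeff x g) = x :=
  (hcp.exists_eq_sum x).choose_spec.2.symm

theorem coeff_sum_delta {a : G → R} (ha : ∀ g, pa.e g * a g = a g) :
    hcp.coeff (∑ g, δ g (a g)) = a :=
  hcp.eq_of_sum_eq (hcp.e_mul_coeff _) ha (hcp.sum_delta_coeff _)

theorem coeff_add (x y : A) : hcp.coeff (x + y) = hcp.coeff x + hcp.coeff y := by
  conv_lhs => rw [← hcp.sum_delta_coeff x, ← hcp.sum_delta_coeff y, ← Finset.sum_add_distrib]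
  simp_rw [← hcp.add]
  exact hcp.coeff_sum_delta fun g => by simp [mul_add, hcp.e_mul_coeff]

theorem coeff_delta [DecidableEq G] {g : G} {c : R} (hc : pa.e g * c = c) :
    hcp.coeff (δ g c) = Pi.single g c := by
  have hsum : δ g c = ∑ h, δ h ((Pi.single g c : G → R) h) := by
    rw [Fintype.sum_eq_single g fun h hh => by simp [hh, hcp.delta_zero], Pi.single_eq_same]
  rw [hsum, hcp.coeff_sum_delta]
  intro h
  by_cases hh : h = g
  · subst hh
    simpa using hc
  · simp [hh]

theorem coeff_delta_one_mul (b : R) (x : A) :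
    hcp.coeff (δ 1 b * x) = fun g => b * hcp.coeff x g := by
  conv_lhs => rw [← hcp.sum_delta_coeff x, Finset.mul_sum]
  simp_rw [hcp.delta_one_mul_delta b (hcp.e_mul_coeff x _)]
  exact hcp.coeff_sum_delta fun g => by rw [← mul_assoc, pa.central, mul_assoc, hcp.e_mul_coeff]

noncomputable def coeffOne : A →+ R :=
  AddMonoidHom.mk' (fun x => hcp.coeff x 1) fun x y => by rw [hcp.coeff_add]; rfl

theorem coeffOne_deltaOne_mul (b : R) (x : A) :
    hcp.coeffOne (hcp.deltaOne b * x) = b * hcp.coeffOne x :=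
  congrFun (hcp.coeff_delta_one_mul b x) 1

theorem coeffOne_one : hcp.coeffOne 1 = 1 := by
  classical
  show hcp.coeff 1 1 = 1
  rw [← hcp.one, hcp.coeff_delta (by rw [pa.e_one, mul_one])]
  simp

theorem exists_eq_sum_e_mul_deltaOne (x : A) :
    ∃ c : G → R, x = ∑ g, δ g (pa.e g) * hcp.deltaOne (c g) := by
  choose c hc using fun g => hcp.exists_delta_eq_mul_delta_one (hcp.e_mul_coeff x g)
  exact ⟨c, by simp_rw [deltaOne_apply, ← hc, hcp.sum_delta_coeff]⟩

end IsPartialSkewGroupRing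

/-- Let `α` be a partial action of a finite group `G` on a
unital ring `R`.  Then `R` has right Krull dimension if and only if `R*_α G`
does, in which case `Kdim(R) = Kdim(R*_α G)` (the same ordinals bound the two
deviations). -/
theorem partialSkewGroupRing_krullDim_eq_of_finite_group
    {G R : Type} [Group G] [Finite G] [Ring R]
    (pa : PartialAction G R)
    (A : Type) [Ring A] (δ : G → R → A)
    (hcp : IsPartialSkewGroupRing pa A δ) :
    (HasRightKrullDim R ↔ HasRightKrullDim A) ∧
    (∀ o : Ordinal.{0},
      DeviationLE o (Submodule Rᵐᵒᵖ Rᵐᵒᵖ) ↔ DeviationLE o (Submodule Aᵐᵒᵖ Aᵐᵒᵖ)) := by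
  have := Fintype.ofFinite G
  have hdev (o : Ordinal.{0}) :
      DeviationLE o (Submodule Rᵐᵒᵖ Rᵐᵒᵖ) ↔ DeviationLE o (Submodule Aᵐᵒᵖ Aᵐᵒᵖ) :=
    ⟨DeviationLE.rightIdeals_of_finite hcp.deltaOne _ hcp.exists_eq_sum_e_mul_deltaOne,
      DeviationLE.rightIdeals_of_retraction hcp.deltaOne hcp.coeffOne hcp.coeffOne_deltaOne_mul
        hcp.coeffOne_one⟩
  exact ⟨exists_congr hdev, hdev⟩
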